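/- Let f : X → X be a continuous map on a compact metric space X such that every nonempty closed f-invariant subset of X has nonempty interior. Then for every clopen set V ⊆ X, the basin B(V) = ⋃_{n≥0} f^{-n}(V) is clopen. -/

import Mathlib

/-!
The basin `B` of an open set is open and satisfies `f⁻¹ B ⊆ B`. When `V` is also closed, a point of
`closure B \ B` lies outside `V`, hence in the closure of `B \ V ⊆ f⁻¹ B`, so `f` maps the frontier
of `B` into `closure B \ B` again. The frontier of an open set is a closed invariant set with empty
interior, so by hypothesis it is empty, i.e. `B` is clopen.
-/

open Set

def basin {α : Type*} (f : α → α) (V : Set α) : Set α := ⋃ n : ℕ, f^[n] ⁻¹' V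

section basin

variable {α : Type*} {f : α → α} {V : Set α}

theorem mem_basin_iff {x : α} : x ∈ basin f V ↔ ∃ n, f^[n] x ∈ V := by
  simp only [basin, mem_iUnion, mem_preimage]

theorem subset_basin : V ⊆ basin f V := fun _ hx => mem_basin_iff.2 ⟨0, hx⟩

theorem preimage_basin_subset : f ⁻¹' basin f V ⊆ basin f V := by
  intro x hx
  obtain ⟨n, hn⟩ := mem_basin_iff.1 hx
  exact mem_basin_iff.2 ⟨n + 1, by rwa [Function.iterate_succ_apply]⟩

theorem basin_diff_subset_preimage : basin f V \ V ⊆ f ⁻¹' basin f V := by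
  rintro x ⟨hxB, hxV⟩
  obtain ⟨_ | n, hn⟩ := mem_basin_iff.1 hxB
  · exact absurd hn hxV
  · exact mem_basin_iff.2 ⟨n, by rwa [Function.iterate_succ_apply] at hn⟩

variable [TopologicalSpace α]

theorem isOpen_basin (hf : Continuous f) (hV : IsOpen V) : IsOpen (basin f V) :=
  isOpen_iUnion fun n => hV.preimage (hf.iterate n)

theorem mapsTo_frontier_basin (hf : Continuous f) (hV : IsClopen V) :
    MapsTo f (frontier (basin f V)) (frontier (basin f V)) := by
  rw [(isOpen_basin hf hV.isOpen).frontier_eq]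
  rintro x ⟨hx_closure, hx_notin⟩
  have hxV : x ∈ Vᶜ := fun h => hx_notin (subset_basin h)
  have hx_diff : x ∈ closure (basin f V \ V) := by
    simpa only [inter_comm Vᶜ, sdiff_eq] using
      hV.isClosed.isOpen_compl.inter_closure ⟨hxV, hx_closure⟩
  exact ⟨hf.closure_preimage_subset _ (closure_mono basin_diff_subset_preimage hx_diff),
    fun h => hx_notin (preimage_basin_subset h)⟩

end basin

theorem interior_frontier_of_isOpen {α : Type*} [TopologicalSpace α] {s : Set α} (hs : IsOpen s) :
    interior (frontier s) = ∅ := by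
  rw [← frontier_compl]
  exact interior_frontier hs.isClosed_compl

theorem clopen_basin_of_subsystems_nonempty_interior_general (X : Type*) [MetricSpace X]
    (f : X → X) (hf : Continuous f)
    (hsub : ∀ Y : Set X, Y.Nonempty → IsClosed Y → f '' Y ⊆ Y →
      (interior Y).Nonempty)
    (V : Set X) (hV : IsClopen V) :
    IsClopen (⋃ n : ℕ, f^[n] ⁻¹' V) := by
  change IsClopen (basin f V)
  rw [isClopen_iff_frontier_eq_empty, ← not_nonempty_iff_eq_empty]
  intro h_nonempty
  have h_interior := hsub _ h_nonempty isClosed_frontier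
    (mapsTo_frontier_basin hf hV).image_subset
  rw [interior_frontier_of_isOpen (isOpen_basin hf hV.isOpen)] at h_interior
  exact not_nonempty_empty h_interior

/-- If every nonempty closed invariant subset of a compact metric system has
nonempty interior, then every clopen set has a clopen basin. -/
theorem clopen_basin_of_subsystems_nonempty_interior (X : Type*) [MetricSpace X]
    [CompactSpace X] (f : X → X) (hf : Continuous f)
    (hsub : ∀ Y : Set X, Y.Nonempty → IsClosed Y → f '' Y ⊆ Y →
      (interior Y).Nonempty)
    (V : Set X) (hV : IsClopen V) :
    IsClopen (⋃ n : ℕ, f^[n] ⁻¹' V) :=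
  clopen_basin_of_subsystems_nonempty_interior_general X f hf hsub V hV
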